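/- Let s ∈ ℕ and let G and H be graphs on the same vertex set, each with minimum degree at least 3. Then for all k ≥ 1: if the 2k-dimensional Weisfeiler-Leman algorithm does not distinguish G^3 and H^3, then the k-dimensional Weisfeiler-Leman algorithm does not distinguish G^s and H^s. -/

import Mathlib

/-- The edges of `G`, oriented according to the linear order on the vertices. -/
def SubEdges {V : Type} [LinearOrder V] (G : SimpleGraph V) : Type :=
  {p : V × V // p.1 < p.2 ∧ G.Adj p.1 p.2}

/-- The vertex set of the `s`-subdivision of `G`: the original vertices together with
`s` new internal path vertices for each edge. -/
def SubdivVerts {V : Type} [LinearOrder V] (G : SimpleGraph V) (s : ℕ) : Type :=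
  V ⊕ (SubEdges G × Fin s)

/-- The `s`-subdivision `G^s` of `G`: every edge of `G` is replaced by a path with `s`
new internal vertices (for `s = 0` this is `G` itself). -/
def subdivision {V : Type} [LinearOrder V] (G : SimpleGraph V) (s : ℕ) :
    SimpleGraph (SubdivVerts G s) :=
  SimpleGraph.fromRel (fun x y =>
    match x, y with
    | Sum.inl u, Sum.inl v => s = 0 ∧ G.Adj u v
    | Sum.inl u, Sum.inr (e, j) => (u = e.1.1 ∧ (j : ℕ) = 0) ∨ (u = e.1.2 ∧ (j : ℕ) = s - 1)
    | Sum.inr (e, j), Sum.inr (e', j') => e = e' ∧ (j : ℕ) + 1 = (j' : ℕ)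
    | Sum.inr _, Sum.inl _ => False)

/-- Tuples `v` in `G` and `w` in `H` have the same atomic type: they realize the same
equalities and the same adjacencies. -/
def atpEq {V W : Type} (G : SimpleGraph V) (H : SimpleGraph W) {m : ℕ}
    (v : Fin m → V) (w : Fin m → W) : Prop :=
  ∀ i j : Fin m, ((v i = v j) ↔ (w i = w j)) ∧ (G.Adj (v i) (v j) ↔ H.Adj (w i) (w j))

/-- `wlEq G H k r v w` : the `k`-tuples `v` (in `G`) and `w` (in `H`) receive the same
color after `r` refinement rounds of the `k`-dimensional Weisfeiler-Leman algorithm. -/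
def wlEq {V W : Type} (G : SimpleGraph V) (H : SimpleGraph W) (k : ℕ) :
    ℕ → (Fin k → V) → (Fin k → W) → Prop
  | 0 => fun v w => atpEq G H v w
  | (r + 1) => fun v w =>
      wlEq G H k r v w ∧
      ∃ b : V ≃ W, ∀ u : V,
        atpEq G H (Fin.snoc v u) (Fin.snoc w (b u)) ∧
        ∀ i : Fin k, wlEq G H k r (Function.update v i u) (Function.update w i (b u))

/-- `G` and `H` are not distinguished by the `k`-dimensional Weisfeiler-Leman algorithm:
at every refinement round, every color has the same multiplicity among `k`-tuples of `G`
and of `H`, i.e. there is a color-preserving bijection between the tuple spaces. -/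
def WLIndistinguishable {V W : Type} (G : SimpleGraph V) (H : SimpleGraph W) (k : ℕ) : Prop :=
  ∀ r : ℕ, ∃ F : (Fin k → V) ≃ (Fin k → W), ∀ v, wlEq G H k r v (F v)

/-!
A vertex of `Gˢ` is determined by its `depth`, its position counted from the nearer end of its
edge, together with its `code` in `G³`: the vertex of `G³` on the same edge and on the same side
of the midpoint (the middle vertex for the midpoint itself). Since `G` has minimum degree `3`,
the original vertices of `G³` are those of degree at least `3`, so original vertices, middle
vertices and the remaining ones are definable in two-variable counting logic, and adjacency in
`Gˢ` is a definable relation between codes once the two depths are fixed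
(`subdivision_adj_iff_realize`). Formulas of rank `r` are preserved by `r` rounds of WL on any
two pebbles (`wlEq.realize_iff`).

Each pebble of `k`-WL on `Gˢ` is simulated by two pebbles of `2k`-WL on `G³`, both on its code.
To move a pebble to `u`, one copy is first moved to the code of `u`: the bijection chosen in that
round determines the image of `u`, while the other copy still marks the old position, so `u` can
be compared with every current pebble. Then the second copy follows, so two rounds on `G³`
simulate one round on `Gˢ`.
-/

open Function

theorem Relator.exists_equiv_of_biTotal_of_biUnique {α β : Type*} {R : α → β → Prop}
    (ht : Relator.BiTotal R) (hu : Relator.BiUnique R) : ∃ e : α ≃ β, ∀ a, R a (e a) := by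
  choose f hf using ht.1
  choose g hg using ht.2
  exact ⟨⟨f, g, fun a => hu.1 (hg (f a)) (hf a), fun b => hu.2 (hf (g b)) (hg b)⟩, hf⟩

section WL

variable {α β : Type} {A : SimpleGraph α} {B : SimpleGraph β} {k r : ℕ}

theorem atpEq_snoc_iff {v : Fin k → α} {w : Fin k → β} {u : α} {u' : β} :
    atpEq A B (Fin.snoc v u) (Fin.snoc w u') ↔ atpEq A B v w ∧
      ∀ i, (u = v i ↔ u' = w i) ∧ (A.Adj u (v i) ↔ B.Adj u' (w i)) := by
  constructor
  · intro h
    refine ⟨fun i j => by simpa using h i.castSucc j.castSucc, fun i => ?_⟩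
    simpa using h (Fin.last k) i.castSucc
  · rintro ⟨h, hu⟩ i j
    induction i using Fin.lastCases <;> induction j using Fin.lastCases <;>
      simp [h _ _, (hu _).1, (hu _).2, eq_comm, A.adj_comm, B.adj_comm]

theorem wlEq.atpEq {v : Fin k → α} {w : Fin k → β} (h : wlEq A B k r v w) :
    atpEq A B v w := by
  induction r with
  | zero => exact h
  | succ r ih => exact ih h.1

theorem wlEq_succ_iff {v : Fin k → α} {w : Fin k → β} :
    wlEq A B k (r + 1) v w ↔ wlEq A B k r v w ∧ ∃ b : α ≃ β, ∀ u,
      (∀ i, (u = v i ↔ b u = w i) ∧ (A.Adj u (v i) ↔ B.Adj (b u) (w i))) ∧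
      ∀ i, wlEq A B k r (update v i u) (update w i (b u)) := by
  constructor
  · rintro ⟨h, b, hb⟩
    exact ⟨h, b, fun u => ⟨(atpEq_snoc_iff.1 (hb u).1).2, (hb u).2⟩⟩
  · rintro ⟨h, b, hb⟩
    exact ⟨h, b, fun u => ⟨atpEq_snoc_iff.2 ⟨h.atpEq, (hb u).1⟩, (hb u).2⟩⟩

theorem wlEq.mono {r' : ℕ} (hr : r' ≤ r) {v : Fin k → α} {w : Fin k → β}
    (h : wlEq A B k r v w) : wlEq A B k r' v w := by
  induction hr with
  | refl => exact h
  | step _ ih => exact ih h.1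

theorem wlEq.symm {v : Fin k → α} {w : Fin k → β} (h : wlEq A B k r v w) :
    wlEq B A k r w v := by
  induction r generalizing v w with
  | zero => exact fun i j => ⟨(h i j).1.symm, (h i j).2.symm⟩
  | succ r ih =>
    obtain ⟨h, b, hb⟩ := wlEq_succ_iff.1 h
    refine wlEq_succ_iff.2 ⟨ih h, b.symm, fun u => ?_⟩
    obtain ⟨hrel, hnext⟩ := hb (b.symm u)
    simp only [Equiv.apply_symm_apply] at hrel hnext
    exact ⟨fun i => ⟨(hrel i).1.symm, (hrel i).2.symm⟩, fun i => ih (hnext i)⟩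

theorem wlEq.update_update {va : Fin k → α} {wb : Fin k → β} {ι : Fin k} {u : α} {u' : β}
    (h : wlEq A B k (r + 1) (update va ι u) (update wb ι u')) (ι' : Fin k) :
    wlEq A B k r (update (update va ι u) ι' u) (update (update wb ι u') ι' u') := by
  obtain ⟨-, b, hb⟩ := wlEq_succ_iff.1 h
  have hbu : b u = u' := by simpa using ((hb u).1 ι).1
  simpa [hbu] using (hb u).2 ι'

theorem wlEq_of_simulation {R : ℕ → (Fin k → α) → (Fin k → β) → Prop}
    (hatp : ∀ {r v w}, R r v w → atpEq A B v w)
    (hmono : ∀ {r v w}, R (r + 1) v w → R r v w)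
    (hstep : ∀ {r v w}, R (r + 1) v w → ∃ b : α ≃ β, ∀ u,
      (∀ i, (u = v i ↔ b u = w i) ∧ (A.Adj u (v i) ↔ B.Adj (b u) (w i))) ∧
      ∀ i, R r (update v i u) (update w i (b u))) {v : Fin k → α} {w : Fin k → β}
    (h : R r v w) : wlEq A B k r v w := by
  induction r generalizing v w with
  | zero => exact hatp h
  | succ r ih =>
    obtain ⟨b, hb⟩ := hstep h
    exact wlEq_succ_iff.2 ⟨ih (hmono h), b, fun u => ⟨(hb u).1, fun i => ih ((hb u).2 i)⟩⟩

end WL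

/-- Formulas `φ(x, y)` of a fragment of two-variable counting logic: `exNbr φ` quantifies over
the neighbours `z` of `x` and evaluates `φ(z, y)`, so only two pebbles are ever needed. -/
inductive PairFormula : Type
  | eq
  | adj
  | degGe (n : ℕ)
  | lit (p : Prop)
  | neg (φ : PairFormula)
  | and (φ ψ : PairFormula)
  | or (φ ψ : PairFormula)
  | swap (φ : PairFormula)
  | exNbr (φ : PairFormula)

namespace PairFormula

@[simp] def Realize {α : Type} : PairFormula → SimpleGraph α → α → α → Prop
  | eq, _, x, y => x = y
  | adj, A, x, y => A.Adj x y
  | degGe n, A, x, _ => n ≤ (A.neighborSet x).ncard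
  | lit p, _, _, _ => p
  | neg φ, A, x, y => ¬ φ.Realize A x y
  | and φ ψ, A, x, y => φ.Realize A x y ∧ ψ.Realize A x y
  | or φ ψ, A, x, y => φ.Realize A x y ∨ ψ.Realize A x y
  | swap φ, A, x, y => φ.Realize A y x
  | exNbr φ, A, x, y => ∃ z, A.Adj x z ∧ φ.Realize A z y

def rank : PairFormula → ℕ
  | eq | adj | lit _ => 0
  | degGe _ => 1
  | neg φ | swap φ => φ.rank
  | and φ ψ | or φ ψ => max φ.rank ψ.rank
  | exNbr φ => φ.rank + 1

end PairFormula

open PairFormula in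
theorem wlEq.realize_iff {α β : Type} {A : SimpleGraph α} {B : SimpleGraph β} {K r : ℕ}
    {va : Fin K → α} {wb : Fin K → β} (h : wlEq A B K r va wb) {φ : PairFormula}
    (hφ : φ.rank ≤ r) {ι ι' : Fin K} (hne : ι ≠ ι') :
    φ.Realize A (va ι) (va ι') ↔ φ.Realize B (wb ι) (wb ι') := by
  induction φ generalizing r va wb ι ι' with
  | eq => exact (h.atpEq ι ι').1
  | adj => exact (h.atpEq ι ι').2
  | lit p => exact Iff.rfl
  | neg φ ih => exact (ih h hφ hne).not
  | and φ ψ ihφ ihψ =>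
    simp only [rank, max_le_iff] at hφ
    exact and_congr (ihφ h hφ.1 hne) (ihψ h hφ.2 hne)
  | or φ ψ ihφ ihψ =>
    simp only [rank, max_le_iff] at hφ
    exact or_congr (ihφ h hφ.1 hne) (ihψ h hφ.2 hne)
  | swap φ ih => exact ih h hφ hne.symm
  | degGe n =>
    obtain ⟨r, rfl⟩ := Nat.exists_eq_add_of_le' hφ
    obtain ⟨-, b, hb⟩ := wlEq_succ_iff.1 h
    have himage : B.neighborSet (wb ι) = b '' A.neighborSet (va ι) := by
      ext z
      obtain ⟨u, rfl⟩ := b.surjective z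
      simp [A.adj_comm, B.adj_comm, ((hb u).1 ι).2]
    simp [himage, Set.ncard_image_of_injective _ b.injective]
  | exNbr φ ih =>
    obtain ⟨r, rfl⟩ := Nat.exists_eq_add_of_le' hφ
    obtain ⟨-, b, hb⟩ := wlEq_succ_iff.1 h
    refine b.exists_congr fun u => and_congr ?_ ?_
    · rw [A.adj_comm, B.adj_comm]
      exact ((hb u).1 ι).2
    · simpa [update_of_ne hne.symm] using ih ((hb u).2 ι) (Nat.le_of_succ_le_succ hφ) hne

namespace SubEdges

variable {V : Type} [LinearOrder V] {G : SimpleGraph V}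

def fst (e : SubEdges G) : V := e.1.1

def snd (e : SubEdges G) : V := e.1.2

theorem fst_lt_snd (e : SubEdges G) : e.fst < e.snd := e.2.1

theorem adj (e : SubEdges G) : G.Adj e.fst e.snd := e.2.2

theorem ext_iff {e e' : SubEdges G} : e = e' ↔ e.fst = e'.fst ∧ e.snd = e'.snd :=
  Subtype.ext_iff.trans Prod.ext_iff

def ofAdj {x y : V} (h : G.Adj x y) : SubEdges G :=
  ⟨(min x y, max x y), min_lt_max.2 h.ne, by
    rcases le_total x y with hxy | hxy
    · simpa [hxy] using h
    · simpa [hxy] using h.symm⟩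

@[simp] theorem fst_ofAdj {x y : V} (h : G.Adj x y) : (ofAdj h).fst = min x y := rfl

@[simp] theorem snd_ofAdj {x y : V} (h : G.Adj x y) : (ofAdj h).snd = max x y := rfl

end SubEdges

namespace SubdivVerts

variable {V : Type} [LinearOrder V] {G : SimpleGraph V} {s : ℕ}

def orig (x : V) : SubdivVerts G s := Sum.inl x

def internal (e : SubEdges G) (j : Fin s) : SubdivVerts G s := Sum.inr (e, j)

theorem orig_or_internal (u : SubdivVerts G s) :
    (∃ x, u = orig x) ∨ ∃ e j, u = internal e j := by
  rcases u with x | ⟨e, j⟩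
  exacts [Or.inl ⟨x, rfl⟩, Or.inr ⟨e, j, rfl⟩]

theorem exists_iff {P : SubdivVerts G s → Prop} :
    (∃ u, P u) ↔ (∃ x, P (orig x)) ∨ ∃ e j, P (internal e j) := by
  refine ⟨fun ⟨u, hu⟩ => ?_, fun h => ?_⟩
  · rcases orig_or_internal u with ⟨x, rfl⟩ | ⟨e, j, rfl⟩
    exacts [Or.inl ⟨x, hu⟩, Or.inr ⟨e, j, hu⟩]
  · rcases h with ⟨x, hx⟩ | ⟨e, j, hej⟩
    exacts [⟨_, hx⟩, ⟨_, hej⟩]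

@[simp] theorem orig_inj {x y : V} : (orig x : SubdivVerts G s) = orig y ↔ x = y :=
  Sum.inl_injective.eq_iff

@[simp] theorem internal_inj {e e' : SubEdges G} {j j' : Fin s} :
    internal e j = internal e' j' ↔ e = e' ∧ j = j' :=
  Sum.inr_injective.eq_iff.trans Prod.ext_iff

@[simp] theorem orig_ne_internal {x : V} {e : SubEdges G} {j : Fin s} : orig x ≠ internal e j :=
  Sum.inl_ne_inr

@[simp] theorem internal_ne_orig {x : V} {e : SubEdges G} {j : Fin s} : internal e j ≠ orig x :=
  Sum.inr_ne_inl

end SubdivVerts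

open SubdivVerts

section Subdivision

variable {V : Type} [LinearOrder V] {G : SimpleGraph V} {s : ℕ}

@[simp] theorem subdivision_adj_orig_orig {x y : V} :
    (subdivision G s).Adj (orig x) (orig y) ↔ s = 0 ∧ G.Adj x y := by
  change Sum.inl x ≠ Sum.inl y ∧ (s = 0 ∧ G.Adj x y ∨ s = 0 ∧ G.Adj y x) ↔ _
  simp only [ne_eq, Sum.inl.injEq, G.adj_comm y x, or_self]
  exact ⟨fun h => h.2, fun h => ⟨h.2.ne, h⟩⟩

@[simp] theorem subdivision_adj_orig_internal {x : V} {e : SubEdges G} {j : Fin s} :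
    (subdivision G s).Adj (orig x) (internal e j) ↔
      (x = e.fst ∧ (j : ℕ) = 0) ∨ (x = e.snd ∧ (j : ℕ) = s - 1) := by
  change Sum.inl x ≠ Sum.inr (e, j) ∧
    ((x = e.fst ∧ (j : ℕ) = 0 ∨ x = e.snd ∧ (j : ℕ) = s - 1) ∨ False) ↔ _
  simp

@[simp] theorem subdivision_adj_internal_orig {x : V} {e : SubEdges G} {j : Fin s} :
    (subdivision G s).Adj (internal e j) (orig x) ↔
      (x = e.fst ∧ (j : ℕ) = 0) ∨ (x = e.snd ∧ (j : ℕ) = s - 1) := by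
  rw [SimpleGraph.adj_comm, subdivision_adj_orig_internal]

@[simp] theorem subdivision_adj_internal_internal {e e' : SubEdges G} {j j' : Fin s} :
    (subdivision G s).Adj (internal e j) (internal e' j') ↔
      e = e' ∧ ((j : ℕ) + 1 = j' ∨ (j' : ℕ) + 1 = j) := by
  change Sum.inr (e, j) ≠ Sum.inr (e', j') ∧ (e = e' ∧ _ ∨ e' = e ∧ _) ↔ _
  constructor
  · rintro ⟨-, ⟨rfl, h⟩ | ⟨rfl, h⟩⟩ <;> simp [h]
  · rintro ⟨rfl, h⟩
    refine ⟨fun h' => ?_, h.imp (⟨rfl, ·⟩) (⟨rfl, ·⟩)⟩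
    simp only [Sum.inr.injEq, Prod.mk.injEq, Fin.ext_iff, true_and] at h'
    omega

end Subdivision

section Degree

variable {V : Type} [LinearOrder V] {G : SimpleGraph V}

theorem ncard_neighborSet_subdivision_orig {s : ℕ} (hs : s ≠ 0) (x : V) :
    ((subdivision G s).neighborSet (orig x)).ncard = (G.neighborSet x).ncard := by
  symm
  refine Set.ncard_congr (fun y hy => internal (SubEdges.ofAdj ((G.mem_neighborSet x y).1 hy))
    (if x < y then ⟨0, by omega⟩ else ⟨s - 1, by omega⟩))
    (fun y hy => ?_) (fun y y' hy hy' => ?_) (fun z hz => ?_)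
  · split_ifs with hxy
    · simp [hxy.le]
    · simp [not_lt.1 hxy]
  · simp only [internal_inj, SubEdges.ext_iff, SubEdges.fst_ofAdj, SubEdges.snd_ofAdj]
    rintro ⟨⟨h₁, h₂⟩, -⟩
    rcases le_total x y with h | h <;> rcases le_total x y' with h' | h' <;>
      simp only [h, h', min_eq_left, min_eq_right, max_eq_left, max_eq_right] at h₁ h₂ <;>
      order
  · rcases orig_or_internal z with ⟨y, rfl⟩ | ⟨e, j, rfl⟩
    · simp only [SimpleGraph.mem_neighborSet, subdivision_adj_orig_orig] at hz
      omega
    · simp only [SimpleGraph.mem_neighborSet, subdivision_adj_orig_internal] at hz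
      rcases hz with ⟨rfl, hj⟩ | ⟨rfl, hj⟩
      · refine ⟨e.snd, e.adj, ?_⟩
        simp [e.fst_lt_snd, e.fst_lt_snd.le, SubEdges.ext_iff, Fin.ext_iff, hj]
      · refine ⟨e.fst, e.adj.symm, ?_⟩
        simp [e.fst_lt_snd.le, not_lt.2 e.fst_lt_snd.le, SubEdges.ext_iff, Fin.ext_iff, hj]

theorem ncard_neighborSet_subdivision_three_internal_le (e : SubEdges G) (q : Fin 3) :
    ((subdivision G 3).neighborSet (internal e q)).ncard ≤ 2 := by
  obtain ⟨a, b, hab⟩ : ∃ a b, (subdivision G 3).neighborSet (internal e q) ⊆ {a, b} := by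
    refine ⟨if q = 0 then orig e.fst else internal e (q - 1),
      if q = 2 then orig e.snd else internal e (q + 1), fun z hz => ?_⟩
    rcases orig_or_internal z with ⟨y, rfl⟩ | ⟨f, j, rfl⟩ <;>
      fin_cases q <;> simp at hz ⊢
    all_goals first
      | exact hz
      | obtain ⟨rfl, hj⟩ := hz; simp only [true_and, Fin.ext_iff]; omega
  exact (Set.ncard_le_ncard hab).trans ((Set.ncard_insert_le a {b}).trans (by simp))

end Degree

namespace SubdivVerts

variable {V : Type} [LinearOrder V] {G : SimpleGraph V} {s : ℕ}

def code : SubdivVerts G s → SubdivVerts G 3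
  | Sum.inl x => orig x
  | Sum.inr (e, j) =>
    internal e (if 2 * (j : ℕ) + 1 < s then 0 else if 2 * (j : ℕ) + 1 = s then 1 else 2)

def depth : SubdivVerts G s → ℕ
  | Sum.inl _ => 0
  | Sum.inr (_, j) => min (j : ℕ) (s - 1 - j)

@[simp] theorem code_orig (x : V) : code (orig x : SubdivVerts G s) = orig x := rfl

@[simp] theorem code_internal (e : SubEdges G) (j : Fin s) :
    code (internal e j) =
      internal e (if 2 * (j : ℕ) + 1 < s then 0 else if 2 * (j : ℕ) + 1 = s then 1 else 2) :=
  rfl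

@[simp] theorem depth_internal (e : SubEdges G) (j : Fin s) :
    depth (internal e j) = min (j : ℕ) (s - 1 - j) := rfl

theorem eq_of_code_eq_of_depth_eq {u u' : SubdivVerts G s} (hc : code u = code u')
    (ht : depth u = depth u') : u = u' := by
  rcases orig_or_internal u with ⟨x, rfl⟩ | ⟨e, j, rfl⟩ <;>
    rcases orig_or_internal u' with ⟨x', rfl⟩ | ⟨e', j', rfl⟩ <;>
    simp only [code_orig, code_internal, depth_internal, orig_inj, internal_inj, orig_ne_internal,
      internal_ne_orig] at hc ht ⊢
  · exact hc
  · refine ⟨hc.1, Fin.ext ?_⟩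
    have := hc.2
    split_ifs at this <;> simp [Fin.ext_iff] at this <;> omega

theorem eq_iff_code_eq_and_depth_eq {u u' : SubdivVerts G s} :
    u = u' ↔ code u = code u' ∧ depth u = depth u' :=
  ⟨fun h => h ▸ ⟨rfl, rfl⟩, fun h => eq_of_code_eq_of_depth_eq h.1 h.2⟩

end SubdivVerts

namespace PairFormula

def middle : PairFormula := and (neg (degGe 3)) (neg (exNbr (degGe 3)))

def commonNbr : PairFormula := exNbr adj

def sameEdge : PairFormula := or eq (or adj (exNbr (and middle adj)))

def linked : PairFormula := and (neg eq) (exNbr (exNbr (and middle (exNbr adj))))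

end PairFormula

section ThreeSubdivision

open PairFormula

variable {V : Type} [LinearOrder V] {G : SimpleGraph V}

theorem realize_commonNbr_orig_internal {x : V} {e : SubEdges G} {q : Fin 3} :
    commonNbr.Realize (subdivision G 3) (orig x) (internal e q) ↔
      q = 1 ∧ (x = e.fst ∨ x = e.snd) := by
  simp only [commonNbr, Realize, exists_iff, subdivision_adj_orig_orig,
    subdivision_adj_orig_internal, subdivision_adj_internal_internal]
  constructor
  · rintro (⟨y, ⟨h, -⟩, -⟩ | ⟨f, j, hx, rfl, hj⟩)
    · omega
    · fin_cases q <;> fin_cases j <;> simp_all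
  · rintro ⟨rfl, hx | hx⟩
    · exact Or.inr ⟨e, 0, Or.inl ⟨hx, rfl⟩, rfl, Or.inl rfl⟩
    · exact Or.inr ⟨e, 2, Or.inr ⟨hx, rfl⟩, rfl, Or.inr rfl⟩

variable (hd : ∀ v : V, 3 ≤ (G.neighborSet v).ncard)

include hd

theorem three_le_ncard_neighborSet_subdivision_iff {c : SubdivVerts G 3} :
    3 ≤ ((subdivision G 3).neighborSet c).ncard ↔ ∃ x, c = orig x := by
  rcases orig_or_internal c with ⟨x, rfl⟩ | ⟨e, q, rfl⟩
  · simpa [ncard_neighborSet_subdivision_orig] using hd x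
  · simpa using (ncard_neighborSet_subdivision_three_internal_le e q).trans_lt (by norm_num)

theorem realize_middle {c c' : SubdivVerts G 3} :
    middle.Realize (subdivision G 3) c c' ↔ ∃ e, c = internal e 1 := by
  simp only [middle, Realize, three_le_ncard_neighborSet_subdivision_iff hd]
  rcases orig_or_internal c with ⟨x, rfl⟩ | ⟨e, q, rfl⟩
  · simp
  · fin_cases q <;> simp

theorem realize_sameEdge_internal {e e' : SubEdges G} {q q' : Fin 3} :
    sameEdge.Realize (subdivision G 3) (internal e q) (internal e' q') ↔ e = e' := by
  simp [sameEdge, exists_iff, realize_middle hd]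
  refine ⟨by rintro (⟨h, -⟩ | ⟨h, -⟩ | ⟨-, h, -⟩) <;> exact h, ?_⟩
  rintro rfl
  fin_cases q <;> fin_cases q' <;> simp

theorem realize_linked_orig {x y : V} :
    linked.Realize (subdivision G 3) (orig x) (orig y) ↔ G.Adj x y := by
  simp [linked, exists_iff, realize_middle hd]
  constructor
  · rintro ⟨hne, e, j, hx, -, hy⟩
    have hy : y = e.fst ∨ y = e.snd := by
      rcases hy with ⟨-, -, ⟨h, -⟩ | ⟨h, -⟩⟩ | h <;> simp [h]
    rcases hx with ⟨rfl, -⟩ | ⟨rfl, -⟩ <;> rcases hy with rfl | rfl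
    exacts [absurd rfl hne, e.adj, e.adj.symm, absurd rfl hne]
  · intro h
    refine ⟨h.ne, SubEdges.ofAdj h, ?_⟩
    rcases lt_or_gt_of_ne h.ne with hxy | hxy
    · exact ⟨0, Or.inl ⟨(min_eq_left hxy.le).symm, rfl⟩, Or.inl rfl,
        Or.inl ⟨2, rfl, Or.inr ⟨(max_eq_right hxy.le).symm, rfl⟩⟩⟩
    · exact ⟨2, Or.inr ⟨(max_eq_left hxy.le).symm, rfl⟩, Or.inr rfl,
        Or.inr (min_eq_right hxy.le).symm⟩

end ThreeSubdivision

namespace PairFormula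

def origInternalAdj (t : ℕ) : PairFormula :=
  and (degGe 3) (and (swap (neg (degGe 3)))
    (and (lit (t = 0)) (or adj (and (swap middle) commonNbr))))

/-- The second disjunct covers two vertices on different sides of the midpoint of an edge of
length `s + 1`: they are adjacent iff `t + t' + 2 = s`. -/
def internalAdj (s t t' : ℕ) : PairFormula :=
  and (neg (degGe 3)) (and (swap (neg (degGe 3))) (and sameEdge
    (or (and (or eq (or middle (swap middle))) (lit (t + 1 = t' ∨ t' + 1 = t)))
      (and (neg eq) (and (neg middle) (and (swap (neg middle)) (lit (t + t' + 2 = s))))))))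

def subdivisionAdj (s t t' : ℕ) : PairFormula :=
  or (and (degGe 3) (and (swap (degGe 3)) (and (lit (s = 0)) linked)))
    (or (origInternalAdj t') (or (swap (origInternalAdj t)) (internalAdj s t t')))

def codeFormula (s t : ℕ) : PairFormula :=
  or (and (degGe 3) (lit (t = 0))) (and (neg (degGe 3))
    (or (and middle (lit (2 * t + 1 = s))) (and (neg middle) (lit (2 * t + 1 < s)))))

theorem rank_subdivisionAdj (s t t' : ℕ) : (subdivisionAdj s t t').rank = 4 := rfl

theorem rank_codeFormula (s t : ℕ) : (codeFormula s t).rank = 2 := rfl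

end PairFormula

section Encoding

open PairFormula

variable {V : Type} [LinearOrder V] {G : SimpleGraph V} {s : ℕ}
  (hd : ∀ v : V, 3 ≤ (G.neighborSet v).ncard)

include hd

theorem subdivision_adj_iff_realize {u u' : SubdivVerts G s} :
    (subdivision G s).Adj u u' ↔
      (subdivisionAdj s (depth u) (depth u')).Realize (subdivision G 3) (code u) (code u') := by
  rcases orig_or_internal u with ⟨x, rfl⟩ | ⟨e, j, rfl⟩ <;>
    rcases orig_or_internal u' with ⟨x, rfl⟩ | ⟨e, j, rfl⟩ <;>
    simp [subdivisionAdj, origInternalAdj, internalAdj,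
      three_le_ncard_neighborSet_subdivision_iff hd, realize_middle hd, realize_linked_orig hd,
      realize_sameEdge_internal hd, realize_commonNbr_orig_internal]
  case inl.inr | inr.inl =>
    rcases eq_or_ne x e.fst with rfl | h₁
    · simp only [e.fst_lt_snd.ne, true_and, false_and, or_false, and_true]
      split_ifs <;> simp <;> omega
    rcases eq_or_ne x e.snd with rfl | h₂
    · simp only [h₁, false_and, true_and, false_or, or_true, and_true]
      split_ifs <;> simp <;> omega
    · simp [h₁, h₂]
  case inr.inr =>
    rintro rfl
    split_ifs <;> simp <;> omega

theorem exists_code_depth_iff_realize {c c' : SubdivVerts G 3} {t : ℕ} :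
    (∃ u : SubdivVerts G s, code u = c ∧ depth u = t) ↔
      (codeFormula s t).Realize (subdivision G 3) c c' := by
  rcases orig_or_internal c with ⟨x, rfl⟩ | ⟨e, q, rfl⟩ <;>
    simp [codeFormula, exists_iff, three_le_ncard_neighborSet_subdivision_iff hd, realize_middle hd]
  · exact eq_comm
  constructor
  · rintro ⟨j, hq, rfl⟩
    subst hq
    split_ifs <;> simp <;> omega
  · fin_cases q <;> simp
    · intro ht
      exact ⟨⟨t, by omega⟩, by simp [ht], by simp; omega⟩
    · intro ht
      exact ⟨⟨t, by omega⟩, by simp [ht.symm], by simp; omega⟩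
    · intro ht
      exact ⟨⟨s - 1 - t, by omega⟩, by simp; split_ifs <;> simp <;> omega, by simp; omega⟩

end Encoding

section Transfer

open PairFormula

variable {V W : Type} [LinearOrder V] [LinearOrder W] {G : SimpleGraph V} {H : SimpleGraph W}
  {s K r : ℕ} {va : Fin K → SubdivVerts G 3} {wb : Fin K → SubdivVerts H 3} {ι ι' : Fin K}

theorem wlEq.exists_code_depth_iff (hdG : ∀ v : V, 3 ≤ (G.neighborSet v).ncard)
    (hdH : ∀ w : W, 3 ≤ (H.neighborSet w).ncard)
    (h : wlEq (subdivision G 3) (subdivision H 3) K r va wb) (hr : 2 ≤ r) (hne : ι ≠ ι')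
    {t : ℕ} : (∃ u : SubdivVerts G s, code u = va ι ∧ depth u = t) ↔
      ∃ z : SubdivVerts H s, code z = wb ι ∧ depth z = t := by
  rw [exists_code_depth_iff_realize hdG (c' := va ι'),
    exists_code_depth_iff_realize hdH (c' := wb ι')]
  exact h.realize_iff (by rw [rank_codeFormula]; exact hr) hne

theorem wlEq.subdivision_eq_and_adj_iff (hdG : ∀ v : V, 3 ≤ (G.neighborSet v).ncard)
    (hdH : ∀ w : W, 3 ≤ (H.neighborSet w).ncard)
    (h : wlEq (subdivision G 3) (subdivision H 3) K r va wb) (hr : 4 ≤ r) (hne : ι ≠ ι')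
    {u u' : SubdivVerts G s} {z z' : SubdivVerts H s} (hu : code u = va ι) (hu' : code u' = va ι')
    (hz : code z = wb ι) (hz' : code z' = wb ι') (ht : depth u = depth z)
    (ht' : depth u' = depth z') :
    (u = u' ↔ z = z') ∧ ((subdivision G s).Adj u u' ↔ (subdivision H s).Adj z z') := by
  constructor
  · rw [eq_iff_code_eq_and_depth_eq (u := u), eq_iff_code_eq_and_depth_eq (u := z), hu, hu', hz,
      hz', ht, ht']
    exact and_congr_left' (h.atpEq ι ι').1
  · rw [subdivision_adj_iff_realize hdG, subdivision_adj_iff_realize hdH, hu, hu', hz, hz', ht,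
      ht']
    exact h.realize_iff (by rw [rank_subdivisionAdj]; exact hr) hne

end Transfer

section Simulation

variable {V W : Type} [LinearOrder V] [LinearOrder W] {G : SimpleGraph V} {H : SimpleGraph W}
  {s k : ℕ}

theorem exists_equiv_code_depth (b : SubdivVerts G 3 ≃ SubdivVerts H 3)
    (hb : ∀ c t, (∃ u : SubdivVerts G s, code u = c ∧ depth u = t) ↔
      ∃ z : SubdivVerts H s, code z = b c ∧ depth z = t) :
    ∃ β : SubdivVerts G s ≃ SubdivVerts H s,
      ∀ u, code (β u) = b (code u) ∧ depth (β u) = depth u := by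
  refine Relator.exists_equiv_of_biTotal_of_biUnique ⟨fun u => (hb _ _).1 ⟨u, rfl, rfl⟩,
    fun z => ?_⟩ ⟨fun u u' z hu hu' => ?_, fun u z z' hz hz' => ?_⟩
  · obtain ⟨u, hu, ht⟩ := (hb (b.symm (code z)) (depth z)).2 ⟨z, by simp, rfl⟩
    exact ⟨u, by simp [hu], ht.symm⟩
  · exact eq_of_code_eq_of_depth_eq (b.injective (hu.1.symm.trans hu'.1)) (hu.2.symm.trans hu'.2)
  · exact eq_of_code_eq_of_depth_eq (hz.1.trans hz'.1.symm) (hz.2.trans hz'.2.symm)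

def tupleCode (v : Fin k → SubdivVerts G s) : Fin (2 * k) → SubdivVerts G 3 :=
  fun σ => code (v (finProdFinEquiv.symm σ).2)

@[simp] theorem tupleCode_apply (v : Fin k → SubdivVerts G s) (c : Fin 2) (i : Fin k) :
    tupleCode v (finProdFinEquiv (c, i)) = code (v i) := by
  simp [tupleCode]

theorem tupleCode_update (v : Fin k → SubdivVerts G s) (i : Fin k) (u : SubdivVerts G s) :
    tupleCode (update v i u) = update (update (tupleCode v) (finProdFinEquiv (0, i)) (code u))
      (finProdFinEquiv (1, i)) (code u) := by
  funext σ
  obtain ⟨⟨c, j⟩, rfl⟩ := finProdFinEquiv.surjective σ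
  by_cases hj : j = i
  · subst hj
    fin_cases c <;> simp
  · simp [hj]

theorem eq_of_tupleCode_eq {v v' : Fin k → SubdivVerts G s} (hc : tupleCode v = tupleCode v')
    (ht : ∀ i, depth (v i) = depth (v' i)) : v = v' :=
  funext fun i =>
    eq_of_code_eq_of_depth_eq (by simpa using congrFun hc (finProdFinEquiv (0, i))) (ht i)

theorem exists_tupleCode_eq (hdG : ∀ v : V, 3 ≤ (G.neighborSet v).ncard)
    (hdH : ∀ w : W, 3 ≤ (H.neighborSet w).ncard) {r : ℕ} {v : Fin k → SubdivVerts G s}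
    {x : Fin (2 * k) → SubdivVerts H 3}
    (h : wlEq (subdivision G 3) (subdivision H 3) (2 * k) r (tupleCode v) x) (hr : 2 ≤ r) :
    ∃ w : Fin k → SubdivVerts H s, tupleCode w = x ∧ ∀ i, depth (w i) = depth (v i) := by
  have hne (i : Fin k) : finProdFinEquiv ((0 : Fin 2), i) ≠ finProdFinEquiv ((1 : Fin 2), i) := by
    simp
  choose w hw using fun i =>
    (h.exists_code_depth_iff hdG hdH hr (hne i) (t := depth (v i))).1 ⟨v i, by simp, rfl⟩
  refine ⟨w, funext fun σ => ?_, fun i => (hw i).2⟩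
  obtain ⟨⟨c, i⟩, rfl⟩ := finProdFinEquiv.surjective σ
  rw [tupleCode_apply, (hw i).1]
  fin_cases c
  · rfl
  · exact ((h.atpEq _ _).1).1 (by simp)

theorem exists_equiv_tupleCode (hdG : ∀ v : V, 3 ≤ (G.neighborSet v).ncard)
    (hdH : ∀ w : W, 3 ≤ (H.neighborSet w).ncard)
    (F : (Fin (2 * k) → SubdivVerts G 3) ≃ (Fin (2 * k) → SubdivVerts H 3))
    (hF : ∀ x, wlEq (subdivision G 3) (subdivision H 3) (2 * k) 2 x (F x)) :
    ∃ Φ : (Fin k → SubdivVerts G s) ≃ (Fin k → SubdivVerts H s),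
      ∀ v, tupleCode (Φ v) = F (tupleCode v) ∧ ∀ i, depth (Φ v i) = depth (v i) := by
  refine Relator.exists_equiv_of_biTotal_of_biUnique
    ⟨fun v => exists_tupleCode_eq hdG hdH (hF _) le_rfl, fun w => ?_⟩
    ⟨fun v v' w hv hv' => ?_, fun v w w' hw hw' => ?_⟩
  · have h := (hF (F.symm (tupleCode w))).symm
    rw [F.apply_symm_apply] at h
    obtain ⟨v, hv, ht⟩ := exists_tupleCode_eq hdH hdG h le_rfl
    exact ⟨v, by rw [hv, F.apply_symm_apply], fun i => (ht i).symm⟩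
  · exact eq_of_tupleCode_eq (F.injective (hv.1.symm.trans hv'.1))
      fun i => (hv.2 i).symm.trans (hv'.2 i)
  · exact eq_of_tupleCode_eq (hw.1.trans hw'.1.symm) fun i => (hw.2 i).trans (hw'.2 i).symm

variable (G H) in
/-- Two rounds on `G³` per round on `Gˢ`, and `4 = rank (subdivisionAdj s t t')` more to read
off adjacency. -/
def EncodedWLEq (r : ℕ) (v : Fin k → SubdivVerts G s) (w : Fin k → SubdivVerts H s) : Prop :=
  (∀ i, depth (v i) = depth (w i)) ∧
    wlEq (subdivision G 3) (subdivision H 3) (2 * k) (2 * r + 4) (tupleCode v) (tupleCode w)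

namespace EncodedWLEq

theorem mono {r : ℕ} {v : Fin k → SubdivVerts G s} {w : Fin k → SubdivVerts H s}
    (h : EncodedWLEq G H (r + 1) v w) : EncodedWLEq G H r v w :=
  ⟨h.1, h.2.mono (by omega)⟩

variable (hdG : ∀ v : V, 3 ≤ (G.neighborSet v).ncard)
  (hdH : ∀ w : W, 3 ≤ (H.neighborSet w).ncard)
  {r : ℕ} {v : Fin k → SubdivVerts G s} {w : Fin k → SubdivVerts H s}

include hdG hdH

theorem atpEq (h : EncodedWLEq G H r v w) : _root_.atpEq (subdivision G s) (subdivision H s) v w :=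
  fun i j => h.2.subdivision_eq_and_adj_iff hdG hdH (by omega) (ι := finProdFinEquiv (0, i))
    (ι' := finProdFinEquiv (1, j)) (by simp) (by simp) (by simp) (by simp) (by simp) (h.1 i)
    (h.1 j)

theorem exists_equiv (hk : 0 < k) (h : EncodedWLEq G H (r + 1) v w) :
    ∃ β : SubdivVerts G s ≃ SubdivVerts H s, ∀ u,
      (∀ i, (u = v i ↔ β u = w i) ∧
        ((subdivision G s).Adj u (v i) ↔ (subdivision H s).Adj (β u) (w i))) ∧
      ∀ i, EncodedWLEq G H r (update v i u) (update w i (β u)) := by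
  obtain ⟨-, b, hb⟩ := wlEq_succ_iff.1 h.2
  have hcode (c : SubdivVerts G 3) (t : ℕ) :
      (∃ u : SubdivVerts G s, code u = c ∧ depth u = t) ↔
        ∃ z : SubdivVerts H s, code z = b c ∧ depth z = t := by
    simpa using ((hb c).2 (finProdFinEquiv (0, ⟨0, hk⟩))).exists_code_depth_iff hdG hdH
      (by omega) (ι := finProdFinEquiv (0, ⟨0, hk⟩)) (ι' := finProdFinEquiv (1, ⟨0, hk⟩))
      (by simp)
  obtain ⟨β, hβ⟩ := exists_equiv_code_depth b hcode
  refine ⟨β, fun u => ⟨fun i => ?_, fun i => ⟨fun j => ?_, ?_⟩⟩⟩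
  · exact ((hb (code u)).2 (finProdFinEquiv (1, i))).subdivision_eq_and_adj_iff hdG hdH (by omega)
      (ι := finProdFinEquiv (1, i)) (ι' := finProdFinEquiv (0, i)) (by simp) (by simp) (by simp)
      (by simp [(hβ u).1]) (by simp) (hβ u).2.symm (h.1 i)
  · by_cases hj : j = i
    · subst hj
      simp [(hβ u).2]
    · simp [hj, h.1 j]
  · rw [tupleCode_update, tupleCode_update, (hβ u).1]
    exact ((hb (code u)).2 (finProdFinEquiv (0, i))).update_update _

end EncodedWLEq

end Simulation

theorem wl_subdivision_transfer_general {V : Type} [LinearOrder V]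
    (G H : SimpleGraph V) (s k : ℕ) (hk : 1 ≤ k)
    (hdegG : ∀ v : V, 3 ≤ Set.ncard {w : V | G.Adj v w})
    (hdegH : ∀ v : V, 3 ≤ Set.ncard {w : V | H.Adj v w})
    (h : WLIndistinguishable (subdivision G 3) (subdivision H 3) (2 * k)) :
    WLIndistinguishable (subdivision G s) (subdivision H s) k := by
  intro r
  obtain ⟨F, hF⟩ := h (2 * r + 4)
  obtain ⟨Φ, hΦ⟩ := exists_equiv_tupleCode (s := s) hdegG hdegH F
    fun x => (hF x).mono (by omega)
  refine ⟨Φ, fun v => wlEq_of_simulation (R := EncodedWLEq G H) (·.atpEq hdegG hdegH) (·.mono)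
    (·.exists_equiv hdegG hdegH hk) ⟨fun i => ((hΦ v).2 i).symm, (hΦ v).1 ▸ hF _⟩⟩

/-- Let `G` and `H` be graphs on the same vertex set with minimum degree at least `3`.
If `2k`-WL does not distinguish the 3-subdivisions `G³` and `H³`, then `k`-WL does not
distinguish the `s`-subdivisions `Gˢ` and `Hˢ`. -/
theorem wl_subdivision_transfer {V : Type} [Fintype V] [LinearOrder V]
    (G H : SimpleGraph V) (s k : ℕ) (hk : 1 ≤ k)
    (hdegG : ∀ v : V, 3 ≤ Set.ncard {w : V | G.Adj v w})
    (hdegH : ∀ v : V, 3 ≤ Set.ncard {w : V | H.Adj v w})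
    (h : WLIndistinguishable (subdivision G 3) (subdivision H 3) (2 * k)) :
    WLIndistinguishable (subdivision G s) (subdivision H s) k :=
  wl_subdivision_transfer_general G H s k hk hdegG hdegH h
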